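/- (Erdős–Gallai) Every graph with n vertices and more than (k−1)n/2 edges contains a path with k edges. -/

import Mathlib

/-!
Induct on a finite set `S` of vertices containing every edge, keeping `(k - 1) |S| < 2 |E|`.
Deleting a set `T ⊆ S` together with at most `(k - 1) |T| / 2` edges preserves this inequality.
If some vertex of `S` has degree `< k / 2`, delete it with its edges. Otherwise, if there is no
path with `k` edges, a longest path `p = x₀ ⋯ x_ℓ` has `ℓ < k`; all neighbours of its ends lie on
`p` and their degrees add up to more than `ℓ`, so by pigeonhole `x₀ ~ x_{i+1}` and `x_ℓ ~ x_i` for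
some `i`. This closes `p` into a cycle through all of its vertices, so by maximality no edge leaves
`V(p)`, and the at most `(ℓ + 1) ℓ / 2` edges inside `V(p)` can be deleted with `V(p)`.
-/

open Finset

namespace SimpleGraph

variable {V : Type*} {G H : SimpleGraph V} {u v : V}

def HasPathOfLength (G : SimpleGraph V) (n : ℕ) : Prop :=
  ∃ (u v : V) (p : G.Walk u v), p.IsPath ∧ p.length = n

lemma HasPathOfLength.mono {n : ℕ} (hGH : G ≤ H) (h : G.HasPathOfLength n) :
    H.HasPathOfLength n := by
  obtain ⟨u, v, p, hp, rfl⟩ := h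
  exact ⟨u, v, p.mapLe hGH, hp.mapLe hGH, p.length_mapLe hGH⟩

lemma HasPathOfLength.of_le {m n : ℕ} (h : G.HasPathOfLength n) (hmn : m ≤ n) :
    G.HasPathOfLength m := by
  obtain ⟨u, v, p, hp, rfl⟩ := h
  exact ⟨u, _, p.take m, hp.take m, by simp [hmn]⟩

lemma Adj.hasPathOfLength_one {a b : V} (h : G.Adj a b) : G.HasPathOfLength 1 :=
  ⟨a, b, h.toWalk, h.isPath_toWalk, h.length_toWalk⟩

namespace Walk

lemma IsPath.mem_support_of_adj_start {p : G.Walk u v} (hp : p.IsPath)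
    (hlong : ¬G.HasPathOfLength (p.length + 1)) {y : V} (hy : G.Adj u y) : y ∈ p.support := by
  by_contra hyp
  exact hlong ⟨y, v, cons hy.symm p, (cons_isPath_iff _ _).2 ⟨hp, hyp⟩, rfl⟩

lemma exists_crossing_of_length_lt_degree_add_degree [G.LocallyFinite] (p : G.Walk u v)
    (hu : ∀ y, G.Adj u y → y ∈ p.support) (hv : ∀ y, G.Adj v y → y ∈ p.support)
    (hdeg : p.length < G.degree u + G.degree v) :
    ∃ i < p.length, G.Adj u (p.getVert (i + 1)) ∧ G.Adj v (p.getVert i) := by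
  classical
  set A := (range p.length).filter fun i ↦ G.Adj u (p.getVert (i + 1))
  set B := (range p.length).filter fun i ↦ G.Adj v (p.getVert i)
  have hA : G.degree u ≤ #A := by
    refine (card_le_card fun y hy ↦ ?_).trans (card_image_le (f := fun i ↦ p.getVert (i + 1)))
    rw [mem_neighborFinset] at hy
    obtain ⟨j, rfl, hj⟩ := mem_support_iff_exists_getVert.1 (hu y hy)
    obtain ⟨i, rfl⟩ : ∃ i, j = i + 1 :=
      Nat.exists_eq_add_one.2 (Nat.pos_of_ne_zero fun h ↦ hy.ne (by simp [h]))
    exact mem_image.2 ⟨i, mem_filter.2 ⟨mem_range.2 (by omega), hy⟩, rfl⟩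
  have hB : G.degree v ≤ #B := by
    refine (card_le_card fun y hy ↦ ?_).trans (card_image_le (f := p.getVert))
    rw [mem_neighborFinset] at hy
    obtain ⟨j, rfl, hj⟩ := mem_support_iff_exists_getVert.1 (hv y hy)
    have hjl : j ≠ p.length := fun h ↦ hy.ne (by simp [h])
    exact mem_image.2 ⟨j, mem_filter.2 ⟨mem_range.2 (by omega), hy⟩, rfl⟩
  obtain ⟨i, hi⟩ := inter_nonempty_of_card_lt_card_add_card (s := range p.length)
    (filter_subset _ _) (filter_subset _ _) (by simpa using hdeg.trans_le (add_le_add hA hB))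
  simp only [mem_inter, mem_filter, mem_range] at hi
  exact ⟨i, hi.1.1, hi.1.2, hi.2.2⟩

lemma exists_closed_of_crossing (p : G.Walk u v) {i : ℕ} (hi : i < p.length)
    (hu : G.Adj u (p.getVert (i + 1))) (hv : G.Adj v (p.getVert i)) :
    ∃ c : G.Walk u u, c.length = p.length + 1 ∧ c.support.tail.Perm p.support := by
  refine ⟨cons hu ((p.drop (i + 1)).append (cons hv (p.take i).reverse)), ?_, ?_⟩
  · simp only [length_cons, length_append, drop_length, length_reverse, take_length]
    omega
  · simp only [support_cons, List.tail_cons, support_append, support_reverse, support_take,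
      drop_support_eq_support_drop_min]
    rw [min_eq_left hi]
    refine ((List.reverse_perm _).append_left _).trans (List.perm_append_comm.trans ?_)
    rw [List.take_append_drop]

lemma hasPathOfLength_of_adj_notMem {x y w : V} (c : G.Walk x x) (hc : ¬c.Nil)
    (hnd : c.support.tail.Nodup) (hy : y ∈ c.support.tail) (hw : w ∉ c.support.tail)
    (hwy : G.Adj w y) : G.HasPathOfLength c.length := by
  classical
  set c' := c.rotate y (List.mem_of_mem_tail hy)
  have hc' : ¬c'.Nil := by rwa [nil_rotate]
  have hsupp : c'.tail.support.Perm c.support.tail := by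
    rw [support_tail_of_not_nil _ hc']
    exact (support_rotate ..).perm
  refine ⟨w, _, cons hwy c'.tail.reverse, ?_, ?_⟩
  · rw [cons_isPath_iff, isPath_reverse_iff, isPath_def, support_reverse, List.mem_reverse]
    exact ⟨hsupp.nodup_iff.2 hnd, fun h ↦ hw (hsupp.mem_iff.1 h)⟩
  · rw [length_cons, length_reverse, length_tail_add_one hc', length_rotate]

lemma IsPath.mem_support_of_adj [G.LocallyFinite] {p : G.Walk u v} (hp : p.IsPath)
    (hlong : ¬G.HasPathOfLength (p.length + 1)) (hdeg : p.length < G.degree u + G.degree v)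
    {x y : V} (hx : x ∈ p.support) (hxy : G.Adj x y) : y ∈ p.support := by
  classical
  have hv : ∀ y, G.Adj v y → y ∈ p.support := fun y hy ↦ by
    simpa using hp.reverse.mem_support_of_adj_start (by simpa using hlong) hy
  obtain ⟨i, hi, hui, hvi⟩ := exists_crossing_of_length_lt_degree_add_degree p
    (fun y ↦ hp.mem_support_of_adj_start hlong) hv hdeg
  obtain ⟨c, hcl, hcp⟩ := exists_closed_of_crossing p hi hui hvi
  by_contra hy
  refine hlong (hcl ▸ hasPathOfLength_of_adj_notMem c ?_ (hcp.nodup_iff.2 hp.support_nodup)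
    (hcp.mem_iff.2 hx) (fun h ↦ hy (hcp.mem_iff.1 h)) hxy.symm)
  rw [← length_eq_zero_iff, hcl]
  exact Nat.succ_ne_zero _

end Walk

lemma exists_closed_finset_of_not_hasPathOfLength [G.LocallyFinite] {k : ℕ}
    (hk : ¬G.HasPathOfLength k) (hG : G ≠ ⊥) (hdeg : ∀ a ∈ G.support, k ≤ 2 * G.degree a) :
    ∃ P : Finset V, P.Nonempty ∧ #P ≤ k ∧ ↑P ⊆ G.support ∧ ∀ x ∈ P, ∀ y, G.Adj x y → y ∈ P := by
  classical
  obtain ⟨a, b, hab⟩ := ne_bot_iff_exists_adj.1 hG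
  have h1 : G.HasPathOfLength 1 := hab.hasPathOfLength_one
  have hk1 : 1 < k := by
    by_contra! h
    exact hk (h1.of_le h)
  set ℓ := Nat.findGreatest G.HasPathOfLength k
  have hℓ : G.HasPathOfLength ℓ := Nat.findGreatest_spec hk1.le h1
  have hℓ1 : 1 ≤ ℓ := Nat.le_findGreatest hk1.le h1
  have hℓk : ℓ < k := (Nat.findGreatest_le k).lt_of_ne fun h ↦ hk (h ▸ hℓ)
  have hlong : ¬G.HasPathOfLength (ℓ + 1) := Nat.findGreatest_is_greatest (Nat.lt_succ_self ℓ) hℓk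
  obtain ⟨u, v, p, hp, hpℓ⟩ := hℓ
  have hpnil : ¬p.Nil := by
    rw [← Walk.length_eq_zero_iff]
    omega
  have hsupp : ∀ x ∈ p.support, x ∈ G.support := fun x ↦ mem_support_of_mem_walk_support p hpnil
  have hu := hdeg u (hsupp u p.start_mem_support)
  have hv := hdeg v (hsupp v p.end_mem_support)
  refine ⟨p.support.toFinset, ⟨u, by simp⟩, ?_, fun x hx ↦ hsupp x (by simpa using hx), ?_⟩
  · rw [List.toFinset_card_of_nodup hp.support_nodup, Walk.length_support]
    omega
  · intro x hx y hxy
    rw [List.mem_toFinset] at hx ⊢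
    exact hp.mem_support_of_adj (hpℓ ▸ hlong) (by omega) hx hxy

lemma two_mul_card_edgeFinset_inter_sym2_le [DecidableEq V] [Fintype G.edgeSet] (P : Finset V) :
    2 * #(G.edgeFinset ∩ P.sym2) ≤ #P * (#P - 1) := by
  rw [Nat.mul_sub_one, ← offDiag_card, ← Sym2.two_mul_card_image_offDiag]
  gcongr
  intro e he
  rw [mem_inter, mem_edgeFinset] at he
  induction e using Sym2.ind with
  | h a b =>
    rw [mem_edgeSet, Finset.mk_mem_sym2_iff] at he
    exact mem_image.2 ⟨(a, b), mem_offDiag.2 ⟨he.2.1, he.2.2, he.1.ne⟩, rfl⟩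

lemma support_deleteEdges_sym2_subset (P : Finset V) (hP : ∀ x ∈ P, ∀ y, G.Adj x y → y ∈ P) :
    (G.deleteEdges ↑P.sym2).support ⊆ G.support \ ↑P := by
  intro x hx
  obtain ⟨y, hxy⟩ := (mem_support _).1 hx
  rw [deleteEdges_adj, mem_coe, mk_mem_sym2_iff] at hxy
  exact ⟨hxy.1.mem_support_left, fun hxP ↦ hxy.2 ⟨hxP, hP x hxP y hxy.1⟩⟩

theorem hasPathOfLength_of_support_subset [Fintype V] [DecidableEq V] (k : ℕ) (S : Finset V)
    (G : SimpleGraph V) [DecidableRel G.Adj] (hS : G.support ⊆ S)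
    (hE : (k - 1) * #S < 2 * #G.edgeFinset) : G.HasPathOfLength k := by
  induction S using Finset.strongInduction generalizing G with
  | H S ih =>
  have of_delete : ∀ T ⊆ S, T.Nonempty → ∀ (H : SimpleGraph V) [DecidableRel H.Adj], H ≤ G →
      H.support ⊆ G.support \ ↑T → 2 * #G.edgeFinset ≤ 2 * #H.edgeFinset + (k - 1) * #T →
      G.HasPathOfLength k := by
    intro T hTS hT H _ hHG hHT hEH
    have hHS : H.support ⊆ ↑(S \ T) := by
      rw [coe_sdiff]
      exact hHT.trans (Set.sdiff_subset_sdiff_left hS)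
    refine (ih (S \ T) (sdiff_ssubset hTS hT) H hHS ?_).mono hHG
    have : (k - 1) * #T ≤ (k - 1) * #S := Nat.mul_le_mul_left _ (card_le_card hTS)
    rw [card_sdiff_of_subset hTS, Nat.mul_sub]
    omega
  by_cases hlow : ∃ a ∈ S, 2 * G.degree a < k
  · obtain ⟨a, haS, ha⟩ := hlow
    refine of_delete {a} (singleton_subset_iff.2 haS) (singleton_nonempty a) _
      (G.deleteIncidenceSet_le a) (by simpa using G.support_deleteIncidenceSet_subset a) ?_
    have := G.degree_le_card_edgeFinset a
    rw [card_edgeFinset_deleteIncidenceSet, card_singleton]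
    omega
  · push Not at hlow
    by_contra hk
    have hG : G ≠ ⊥ := by
      rw [← edgeFinset_nonempty, ← card_pos]
      omega
    obtain ⟨P, hP, hPk, hPG, hPclosed⟩ := exists_closed_finset_of_not_hasPathOfLength hk hG
      fun a ha ↦ hlow a (hS ha)
    refine hk (of_delete P (by exact_mod_cast hPG.trans hS) hP _ (G.deleteEdges_le _)
      (support_deleteEdges_sym2_subset P hPclosed) ?_)
    have := G.two_mul_card_edgeFinset_inter_sym2_le P
    have : #P * (#P - 1) ≤ (k - 1) * #P := by
      rw [mul_comm]
      exact Nat.mul_le_mul_right _ (by omega)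
    rw [edgeFinset_deleteEdges, ← card_sdiff_add_card_inter G.edgeFinset P.sym2]
    omega

end SimpleGraph

theorem erdos_gallai_path_general {V : Type*} [Fintype V] (G : SimpleGraph V)
    [DecidableRel G.Adj] (k : ℕ)
    (hE : (k - 1) * Fintype.card V < 2 * G.edgeFinset.card) :
    ∃ (u v : V) (p : G.Walk u v), p.IsPath ∧ p.length = k := by
  classical
  exact G.hasPathOfLength_of_support_subset k univ (by simp) hE

/-- Erdős–Gallai: every graph on `n` vertices with more than `(k-1)n/2` edges
contains a path with `k` edges. -/
theorem erdos_gallai_path {V : Type*} [Fintype V] (G : SimpleGraph V)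
    [DecidableRel G.Adj] (k : ℕ) (hk : 1 ≤ k)
    (hE : (k - 1) * Fintype.card V < 2 * G.edgeFinset.card) :
    ∃ (u v : V) (p : G.Walk u v), p.IsPath ∧ p.length = k :=
  erdos_gallai_path_general G k hE
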